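/- arXiv:1905.11733 — 4 statements merged into one kernel-verified Lean document; each statement's English description precedes it below -/
import Mathlib

section
/- Let α be a countable type and let r be a confluent binary relation on α. Then r is decreasing for some labelling with a two-element label set: there exist relations r₀ and r₁ on α with r = r₀ ∪ r₁ (i.e., r a b holds iff r₀ a b or r₁ a b) such that, taking labels {0,1} with strict order 1 ≻ 0, every local peak b ←_i a →_j c (i, j ∈ {0,1}) can be completed into a decreasing diagram: there exist b₁, b₂, c₂, c₁ with b ↔*_{⋎i} b₁, (b₁ →_j b₂ or b₁ = b₂), b₂ ↔*_{⋎{i,j}} c₂, (c₁ →_i c₂ or c₁ = c₂), and c₁ ↔*_{⋎j} c. -/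
/-- Union of the relations whose label lies in `J`. -/
def RelOver {α I : Type*} (r : I → α → α → Prop) (J : Set I) : α → α → Prop :=
  fun a b => ∃ l ∈ J, r l a b

/-- Conversion: reflexive–transitive closure of the symmetric closure. -/
def Conv {α : Type*} (r : α → α → Prop) : α → α → Prop :=
  Relation.ReflTransGen (fun a b => r a b ∨ r b a)

/-!
Label 1 is `r` itself and label 0 a spanning forest of `r`: a partial function `f ⊆ r` whose
conversion contains `r`. A 0/0 peak is trivial because `f` is a function, and every other peak
closes by the 0-conversion between its ends, since 0 lies below one of its labels.

On a conversion class it suffices to have a set `P` reached from the whole class and a function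
on `P` connecting it; outside `P`, `f` takes the first step of a shortest path into `P`. If the
class has a common reduct `v`, take `P = {v}`. Otherwise countability and confluence give a
cofinal `r*`-chain through the class, walked step by step into a cofinal `r`-sequence. No point
is visited infinitely often (it would be a common reduct), so erasing loops leaves an injective
cofinal ray: `P` is the ray and `f` its successor map.
-/

open Function Relation

namespace Relation

variable {α : Type*} {r : α → α → Prop}

def ReachesIn (r : α → α → Prop) (P : α → Prop) : ℕ → α → Prop
  | 0, a => P a
  | n + 1, a => ∃ b, r a b ∧ ReachesIn r P n b

theorem ReflTransGen.exists_reachesIn {P : α → Prop} {a p : α} (h : ReflTransGen r a p)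
    (hp : P p) : ∃ n, ReachesIn r P n a := by
  induction h using ReflTransGen.head_induction_on with
  | refl => exact ⟨0, hp⟩
  | head hab _ ih =>
    obtain ⟨n, hn⟩ := ih
    exact ⟨n + 1, _, hab, hn⟩

def CloserStep (r : α → α → Prop) (P : α → Prop) (a b : α) : Prop :=
  r a b ∧ ∃ n, ReachesIn r P n b ∧ ∀ m, ReachesIn r P m a → n < m

theorem CloserStep.not_target {P : α → Prop} {a b : α} (h : CloserStep r P a b) : ¬ P a :=
  fun ha => by
    obtain ⟨-, n, -, hmin⟩ := h
    exact Nat.not_lt_zero n (hmin 0 ha)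

theorem exists_closerStep {P : α → Prop} {a : α} {N : ℕ} (hN : ReachesIn r P N a)
    (ha : ¬ P a) : ∃ b, CloserStep r P a b := by
  classical
  have hex : ∃ n, ReachesIn r P n a := ⟨N, hN⟩
  obtain ⟨n, hn⟩ : ∃ n, Nat.find hex = n + 1 :=
    Nat.exists_eq_succ_of_ne_zero fun h0 => ha (by simpa [h0, ReachesIn] using Nat.find_spec hex)
  obtain ⟨b, hab, hb⟩ : ReachesIn r P (n + 1) a := hn ▸ Nat.find_spec hex
  exact ⟨b, hab, n, hb, fun m hm => by have := Nat.find_min' hex hm; omega⟩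

open Classical in
noncomputable def towards (r : α → α → Prop) (P : α → Prop) (a : α) : Option α :=
  if h : ∃ b, CloserStep r P a b then some h.choose else none

theorem closerStep_of_mem_towards {P : α → Prop} {a b : α} (h : b ∈ towards r P a) :
    CloserStep r P a b := by
  unfold towards at h
  split_ifs at h with hex
  · exact Option.some_inj.mp h ▸ hex.choose_spec
  · cases h

theorem exists_reflTransGen_towards {P : α → Prop} {a p : α} (h : ReflTransGen r a p)
    (hp : P p) : ∃ q, P q ∧ ReflTransGen (fun u v => v ∈ towards r P u) a q := by
  obtain ⟨N, hN⟩ := h.exists_reachesIn hp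
  clear h hp
  induction N using Nat.strong_induction_on generalizing a with
  | _ N ih =>
    by_cases ha : P a
    · exact ⟨a, ha, .refl⟩
    have hex := exists_closerStep hN ha
    have hb : hex.choose ∈ towards r P a := by
      unfold towards; rw [dif_pos hex]; rfl
    obtain ⟨-, n, hn, hmin⟩ := hex.choose_spec
    obtain ⟨q, hq, hbq⟩ := ih n (hmin N hN) hn
    exact ⟨q, hq, .head hb hbq⟩

theorem reflTransGen_of_reflGen_seq {q : ℕ → α} (hq : ∀ k, ReflGen r (q k) (q (k + 1)))
    {i j : ℕ} (hij : i ≤ j) : ReflTransGen r (q i) (q j) := by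
  induction hij with
  | refl => rfl
  | step _ ih => exact ih.trans (hq _).to_reflTransGen

theorem exists_loop_erasure {q : ℕ → α} (hq : ∀ k, ReflGen r (q k) (q (k + 1)))
    (hfin : ∀ v, (q ⁻¹' {v}).Finite) :
    ∃ m : ℕ → ℕ, StrictMono m ∧ Injective (q ∘ m) ∧ ∀ k, r (q (m k)) (q (m (k + 1))) := by
  have hlast : ∀ i, ∃ L, q L = q i ∧ ∀ j, q j = q i → j ≤ L := fun i => by
    obtain ⟨L, hL, hmax⟩ := Set.exists_max_image _ id (hfin (q i)) ⟨i, rfl⟩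
    exact ⟨L, hL, fun j hj => hmax j hj⟩
  choose L hL_eq hL_max using hlast
  set m : ℕ → ℕ := fun k => (fun i => L i + 1)^[k] 0
  have hm_succ : ∀ k, m (k + 1) = L (m k) + 1 := fun k => iterate_succ_apply' _ k 0
  have hm_mono : StrictMono m := strictMono_nat_of_lt_succ fun k => by
    have := hL_max (m k) (m k) rfl
    rw [hm_succ]
    omega
  refine ⟨m, hm_mono, Injective.of_lt_imp_ne fun j k hjk heq => ?_, fun k => ?_⟩
  · have h1 : m (j + 1) ≤ m k := hm_mono.monotone hjk
    have h2 := hL_max (m j) (m k) heq.symm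
    rw [hm_succ] at h1
    omega
  · have hne : q (L (m k) + 1) ≠ q (L (m k)) := fun h => by
      have := hL_max (m k) _ (h.trans (hL_eq _))
      omega
    rw [hm_succ, ← hL_eq (m k)]
    exact ((reflGen_iff _ _ _).mp (hq (L (m k)))).resolve_left hne

-- In a state `(n, y)`, `y` is the current point and `t n` the current target.
open Classical in
noncomputable def chaseStep (r : α → α → Prop) (t : ℕ → α) (s : ℕ × α) : ℕ × α :=
  if s.2 = t s.1 then (s.1 + 1, s.2) else (s.1, (towards r (· = t s.1) s.2).getD s.2)

theorem reflGen_chaseStep (t : ℕ → α) (s : ℕ × α) : ReflGen r s.2 (chaseStep r t s).2 := by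
  unfold chaseStep
  split_ifs
  · rfl
  · cases h : towards r (· = t s.1) s.2 with
    | none => rfl
    | some b => exact .single (closerStep_of_mem_towards h).1

theorem exists_iterate_chaseStep_eq (t : ℕ → α) {n : ℕ} {y : α}
    (hy : ReflTransGen r y (t n)) : ∃ k, (chaseStep r t)^[k] (n, y) = (n, t n) := by
  obtain ⟨_, rfl, hpath⟩ := exists_reflTransGen_towards (P := (· = t n)) hy rfl
  clear hy
  induction hpath using ReflTransGen.head_induction_on with
  | refl => exact ⟨0, rfl⟩
  | @head y y' hyy' _ ih =>
    obtain ⟨k, hk⟩ := ih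
    have hstep : chaseStep r t (n, y) = (n, y') := by
      simp [chaseStep, (closerStep_of_mem_towards hyy').not_target, Option.mem_def.mp hyy']
    exact ⟨k + 1, by rw [iterate_succ_apply, hstep, hk]⟩

theorem exists_reflGen_seq_through {t : ℕ → α} (ht : ∀ n, ReflTransGen r (t n) (t (n + 1))) :
    ∃ q : ℕ → α, (∀ k, ReflGen r (q k) (q (k + 1))) ∧ ∀ n, ∃ k, q k = t n := by
  set s : ℕ → ℕ × α := fun k => (chaseStep r t)^[k] (0, t 0)
  have hvisit : ∀ n, ∃ k, s k = (n, t n) := by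
    intro n
    induction n with
    | zero => exact ⟨0, rfl⟩
    | succ n ih =>
      obtain ⟨k, hk⟩ := ih
      obtain ⟨k', hk'⟩ := exists_iterate_chaseStep_eq (n := n + 1) t (ht n)
      refine ⟨k' + 1 + k, ?_⟩
      simp only [s, iterate_add_apply]
      rw [show (chaseStep r t)^[k] (0, t 0) = (n, t n) from hk, iterate_succ_apply]
      simpa [chaseStep] using hk'
  refine ⟨fun k => (s k).2, fun k => ?_, fun n => ?_⟩
  · simpa [s, iterate_succ_apply'] using reflGen_chaseStep t (s k)
  · obtain ⟨k, hk⟩ := hvisit n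
    exact ⟨k, show (s k).2 = t n by rw [hk]⟩

def Confluent (r : α → α → Prop) : Prop :=
  ∀ a b c, ReflTransGen r a b → ReflTransGen r a c → Join (ReflTransGen r) b c

theorem Confluent.join_of_eqvGen (hconf : Confluent r) {a b : α} (h : EqvGen r a b) :
    Join (ReflTransGen r) a b :=
  (equivalence_join hconf).eqvGen_iff.mp
    (EqvGen.mono (fun _ b h => ⟨b, .single h, .refl⟩) _ _ h)

theorem Confluent.exists_cofinal_chain [Countable α] (hconf : Confluent r) (ρ : α) :
    ∃ t : ℕ → α, (∀ n, ReflTransGen r (t n) (t (n + 1))) ∧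
      ∀ a, EqvGen r ρ a → ∃ n, ReflTransGen r a (t n) := by
  have : Nonempty α := ⟨ρ⟩
  obtain ⟨e, he⟩ := exists_surjective_nat α
  have hjoin : ∀ x y, ∃ d, ReflTransGen r x d ∧ (EqvGen r x y → ReflTransGen r y d) := by
    intro x y
    by_cases hxy : EqvGen r x y
    · obtain ⟨d, hxd, hyd⟩ := hconf.join_of_eqvGen hxy
      exact ⟨d, hxd, fun _ => hyd⟩
    · exact ⟨x, .refl, fun h => absurd h hxy⟩
  choose j hj_left hj_right using hjoin
  set t : ℕ → α := fun n => Nat.rec ρ (fun k x => j x (e k)) n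
  have ht_class : ∀ n, EqvGen r ρ (t n) := fun n => by
    induction n with
    | zero => exact .refl _
    | succ n ih => exact .trans _ _ _ ih (EqvGen.reflTransGen_le_eqvGen _ _ _ (hj_left _ _))
  refine ⟨t, fun n => hj_left _ _, fun a ha => ?_⟩
  obtain ⟨n, rfl⟩ := he a
  exact ⟨n + 1, hj_right _ _ (.trans _ _ _ (.symm _ _ (ht_class n)) ha)⟩

theorem Confluent.exists_injective_cofinal_ray [Countable α] (hconf : Confluent r) (ρ : α)
    (hnotop : ¬ ∃ v, ∀ a, EqvGen r ρ a → ReflTransGen r a v) :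
    ∃ x : ℕ → α, Injective x ∧ (∀ k, r (x k) (x (k + 1))) ∧
      ∀ a, EqvGen r ρ a → ∃ k, ReflTransGen r a (x k) := by
  obtain ⟨t, ht, ht_cof⟩ := hconf.exists_cofinal_chain ρ
  obtain ⟨q, hq, hq_t⟩ := exists_reflGen_seq_through ht
  have hq_cof : ∀ a, EqvGen r ρ a → ∃ k, ReflTransGen r a (q k) := fun a ha => by
    obtain ⟨n, hn⟩ := ht_cof a ha
    obtain ⟨k, hk⟩ := hq_t n
    exact ⟨k, hk ▸ hn⟩
  have hfin : ∀ v, (q ⁻¹' {v}).Finite := fun v => by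
    by_contra hinf
    refine hnotop ⟨v, fun a ha => ?_⟩
    obtain ⟨k, hk⟩ := hq_cof a ha
    obtain ⟨j, hj, hkj⟩ := Set.Infinite.exists_gt hinf k
    exact hk.trans (hj ▸ reflTransGen_of_reflGen_seq hq hkj.le)
  obtain ⟨m, hm_mono, hm_inj, hm_step⟩ := exists_loop_erasure hq hfin
  refine ⟨q ∘ m, hm_inj, hm_step, fun a ha => ?_⟩
  obtain ⟨k, hk⟩ := hq_cof a ha
  exact ⟨k, hk.trans (reflTransGen_of_reflGen_seq hq (hm_mono.id_le k))⟩

theorem EqvGen.restrict_of_le {p : α → α → Prop} (hpr : p ≤ r) {a b : α} (h : EqvGen p a b) :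
    EqvGen (fun u v => p u v ∧ EqvGen r a u) a b := by
  suffices ∀ x y, EqvGen p x y → EqvGen r a x → EqvGen (fun u v => p u v ∧ EqvGen r a u) x y from
    this a b h (.refl a)
  intro x y hxy hax
  have hpr' : ∀ {x y}, EqvGen p x y → EqvGen r x y := fun h => EqvGen.mono hpr _ _ h
  induction hxy with
  | rel x y h => exact .rel _ _ ⟨h, hax⟩
  | refl => exact .refl _
  | symm x y h ih => exact .symm _ _ (ih (.trans _ _ _ hax (.symm _ _ (hpr' h))))
  | trans x y z hxy _ ih₁ ih₂ => exact .trans _ _ _ (ih₁ hax) (ih₂ (.trans _ _ _ hax (hpr' hxy)))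

theorem exists_spanning_of_cofinal {ρ : α} (P : α → Prop) (gP : α → Option α)
    (hgP : ∀ a b, P a → b ∈ gP a → r a b)
    (hP : ∀ p q, P p → P q → EqvGen (fun u v => P u ∧ v ∈ gP u) p q)
    (hcof : ∀ a, EqvGen r ρ a → ∃ p, P p ∧ ReflTransGen r a p) :
    ∃ g : α → Option α, (∀ a b, b ∈ g a → r a b) ∧
      ∀ a, EqvGen r ρ a → EqvGen (fun u v => v ∈ g u) a ρ := by
  classical
  set g : α → Option α := fun a => if P a then gP a else towards r P a
  have hg_towards : ∀ u v, v ∈ towards r P u → v ∈ g u := fun u v h => by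
    simpa [g, (closerStep_of_mem_towards h).not_target] using h
  have hg_P : ∀ u v, P u ∧ v ∈ gP u → v ∈ g u := fun u v ⟨hu, h⟩ => by simpa [g, hu] using h
  have hreach : ∀ a, EqvGen r ρ a → ∃ p, P p ∧ EqvGen (fun u v => v ∈ g u) a p := fun a ha => by
    obtain ⟨p, hp, hap⟩ := hcof a ha
    obtain ⟨p', hp', hpath⟩ := exists_reflTransGen_towards hap hp
    exact ⟨p', hp', EqvGen.reflTransGen_le_eqvGen _ _ _ (ReflTransGen.mono hg_towards _ _ hpath)⟩
  refine ⟨g, fun a b hab => ?_, fun a ha => ?_⟩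
  · by_cases ha : P a
    · exact hgP a b ha (by simpa [g, ha] using hab)
    · exact (closerStep_of_mem_towards (by simpa [g, ha] using hab)).1
  · obtain ⟨p, hp, hap⟩ := hreach a ha
    obtain ⟨p', hp', hρp'⟩ := hreach ρ (.refl ρ)
    exact .trans _ _ _ hap (.trans _ _ _ (EqvGen.mono hg_P _ _ (hP p p' hp hp')) (.symm _ _ hρp'))

theorem eqvGen_of_seq {x : ℕ → α} {p : α → α → Prop} (hx : ∀ k, p (x k) (x (k + 1))) (i j : ℕ) :
    EqvGen p (x i) (x j) := by
  have h0 : ∀ k, EqvGen p (x 0) (x k) := fun k => by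
    induction k with
    | zero => exact .refl _
    | succ k ih => exact .trans _ _ _ ih (.rel _ _ (hx k))
  exact .trans _ _ _ (.symm _ _ (h0 i)) (h0 j)

theorem Confluent.exists_spanning_of_class [Countable α] (hconf : Confluent r) (ρ : α) :
    ∃ g : α → Option α, (∀ a b, b ∈ g a → r a b) ∧
      ∀ a, EqvGen r ρ a → EqvGen (fun u v => v ∈ g u) a ρ := by
  by_cases htop : ∃ v, ∀ a, EqvGen r ρ a → ReflTransGen r a v
  · obtain ⟨v, hv⟩ := htop
    refine exists_spanning_of_cofinal (· = v) (fun _ => none) (by simp) ?_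
      fun a ha => ⟨v, rfl, hv a ha⟩
    rintro p q rfl rfl
    exact .refl _
  · obtain ⟨x, hx_inj, hx_step, hx_cof⟩ := hconf.exists_injective_cofinal_ray ρ htop
    have hsucc : ∀ k, x (invFun x (x k) + 1) = x (k + 1) := fun k => by
      rw [leftInverse_invFun hx_inj k]
    refine exists_spanning_of_cofinal (· ∈ Set.range x) (fun a => some (x (invFun x a + 1)))
      ?_ ?_ fun a ha => ?_
    · rintro _ b ⟨k, rfl⟩ hb
      rw [← Option.mem_some_iff.mp hb, hsucc]
      exact hx_step k
    · rintro _ _ ⟨i, rfl⟩ ⟨j, rfl⟩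
      exact eqvGen_of_seq (fun k => ⟨⟨k, rfl⟩, Option.mem_some_iff.mpr (hsucc k)⟩) i j
    · obtain ⟨k, hk⟩ := hx_cof a ha
      exact ⟨x k, ⟨k, rfl⟩, hk⟩

theorem Confluent.exists_spanning_function [Countable α] (hconf : Confluent r) :
    ∃ f : α → Option α, (∀ a b, b ∈ f a → r a b) ∧
      ∀ a b, r a b → EqvGen (fun u v => v ∈ f u) a b := by
  choose G hG_sub hG_span using hconf.exists_spanning_of_class
  let rep : α → α := fun a => (Quotient.mk (EqvGen.setoid r) a).out
  have hrep : ∀ a, EqvGen r (rep a) a := Quotient.mk_out (s := EqvGen.setoid r)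
  refine ⟨fun a => G (rep a) a, fun a b => hG_sub _ a b, fun a b hab => ?_⟩
  have hb : EqvGen r (rep a) b := .trans _ _ _ (hrep a) (.rel _ _ hab)
  have hGab : EqvGen (fun u v => v ∈ G (rep a) u) a b :=
    .trans _ _ _ (hG_span _ a (hrep a)) (.symm _ _ (hG_span _ b hb))
  refine EqvGen.mono (fun u v ⟨huv, hau⟩ => ?_) _ _ (hGab.restrict_of_le (hG_sub _))
  have : rep u = rep a := congrArg Quotient.out (Quotient.sound (EqvGen.symm _ _ hau))
  simpa [this] using huv

end Relation

theorem conv_eq_eqvGen {α : Type*} (r : α → α → Prop) : Conv r = EqvGen r :=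
  EqvGen.reflTransGen_symmGen r

/-- Every countable confluent relation is decreasing for a two-element label set
`Fin 2` ordered by `<` (so label `1 ≻ 0`). -/
theorem stmt_1 {α : Type*} [Countable α] (r : α → α → Prop)
    (hconf : ∀ a b c, Relation.ReflTransGen r a b → Relation.ReflTransGen r a c →
      ∃ d, Relation.ReflTransGen r b d ∧ Relation.ReflTransGen r c d) :
    ∃ s : Fin 2 → α → α → Prop,
      (∀ a b, r a b ↔ (s 0 a b ∨ s 1 a b)) ∧
      (∀ (i j : Fin 2) (a b c : α), s i a b → s j a c →
        ∃ b₁ b₂ c₂ c₁,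
          Conv (RelOver s {k | k < i}) b b₁ ∧
          (s j b₁ b₂ ∨ b₁ = b₂) ∧
          Conv (RelOver s ({k | k < i} ∪ {k | k < j})) b₂ c₂ ∧
          (s i c₁ c₂ ∨ c₁ = c₂) ∧
          Conv (RelOver s {k | k < j}) c₁ c) := by
  obtain ⟨f, hf_sub, hf_span⟩ := Confluent.exists_spanning_function hconf
  set s : Fin 2 → α → α → Prop := ![fun a b => b ∈ f a, r]
  have hs_sub : ∀ i a b, s i a b → r a b := fun i => by
    fin_cases i
    exacts [hf_sub, fun _ _ h => h]
  refine ⟨s, fun a b => ⟨Or.inr, (·.elim (hf_sub a b) id)⟩, fun i j a b c hb hc => ?_⟩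
  by_cases hij : i = 0 ∧ j = 0
  · obtain ⟨rfl, rfl⟩ := hij
    obtain rfl : b = c := Option.mem_unique hb hc
    exact ⟨b, b, b, b, .refl, .inr rfl, .refl, .inr rfl, .refl⟩
  have h0 : (0 : Fin 2) ∈ ({k | k < i} ∪ {k | k < j} : Set (Fin 2)) := by
    rcases not_and_or.mp hij with h | h
    exacts [.inl (Fin.pos_iff_ne_zero.mpr h), .inr (Fin.pos_iff_ne_zero.mpr h)]
  have hbc : EqvGen (fun u v => v ∈ f u) b c :=
    .trans _ _ _ (.symm _ _ (hf_span a b (hs_sub i a b hb))) (hf_span a c (hs_sub j a c hc))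
  refine ⟨b, b, c, c, .refl, .inr rfl, ?_, .inr rfl, .refl⟩
  rw [conv_eq_eqvGen]
  exact EqvGen.mono (fun u v h => ⟨0, h0, h⟩) _ _ hbc
end

section
/- Every countable confluent rewrite relation has a spanning forest: if α is a countable type and r is a confluent binary relation on α, then there exists a relation s on α such that (1) s is a subrelation of r (s a b implies r a b), (2) s is spanning: the conversion relation of s equals the conversion relation of r (a ↔*_s b iff a ↔*_r b for all a, b), (3) s is deterministic: s a b and s a c imply b = c, and (4) s is acyclic: no element is related to itself by the transitive closure of s. -/
/-!
Treat one conversion class at a time. Confluence makes the class directed, so using an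
enumeration of `α` one builds a path `p 0, p 1, …` of single `r`-steps (or stutters) into which
every element of the class reduces. The level of `x` is the least `n` with `x →* p n`. Levels
never decrease along `r`, so along `p` each level is left at most once, through an edge
`p n → p (n + 1)`. Inside a level every point takes the first step of a shortest path to the
level's exit point (to `p v` if level `v` is never left), and the exit point takes the exit edge.
Each step raises the level, or keeps it and shortens the distance to the target, which rules out
cycles; every point reaches the target of its level, and the targets of consecutive levels along
`p` are linked by exit edges, so each class is connected.
-/

namespace Rewriting

open Relation

variable {α : Type*}

structure IsForest (s : α → α → Prop) : Prop where
  deterministic : ∀ a b c, s a b → s a c → b = c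
  acyclic : ∀ a, ¬ TransGen s a a

section StepToward

variable (ρ : α → α → Prop)

def relPow : ℕ → α → α → Prop
  | 0 => Eq
  | n + 1 => fun a c => ∃ b, ρ a b ∧ relPow n b c

noncomputable def pathDist (a b : α) : ℕ := sInf {n | relPow ρ n a b}

open Classical in
/-- The first step of a shortest `ρ`-path from `a` to `b`, provided `a ≠ b` and `b` is
reachable. -/
noncomputable def stepToward (a b : α) : α :=
  if h : ∃ c, ρ a c ∧ relPow ρ (pathDist ρ a b - 1) c b then h.choose else a

variable {ρ}

theorem reflTransGen_of_relPow {n : ℕ} {a b : α} (h : relPow ρ n a b) :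
    ReflTransGen ρ a b := by
  induction n generalizing a with
  | zero => exact (show a = b from h) ▸ .refl
  | succ n ih => obtain ⟨c, hac, hc⟩ := h; exact .head hac (ih hc)

theorem exists_relPow_of_reflTransGen {a b : α} (h : ReflTransGen ρ a b) :
    ∃ n, relPow ρ n a b := by
  induction h using ReflTransGen.head_induction_on with
  | refl => exact ⟨0, rfl⟩
  | head hab _ ih => obtain ⟨n, hn⟩ := ih; exact ⟨n + 1, _, hab, hn⟩

theorem stepToward_spec {a b : α} (hab : ReflTransGen ρ a b) (hne : a ≠ b) :
    ρ a (stepToward ρ a b) ∧ ReflTransGen ρ (stepToward ρ a b) b ∧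
      pathDist ρ (stepToward ρ a b) b < pathDist ρ a b := by
  have hmin : relPow ρ (pathDist ρ a b) a b := Nat.sInf_mem (exists_relPow_of_reflTransGen hab)
  obtain ⟨n, hn⟩ : ∃ n, pathDist ρ a b = n + 1 := by
    refine Nat.exists_eq_succ_of_ne_zero fun h0 => hne ?_
    rw [h0] at hmin
    exact hmin
  have hstep : ∃ c, ρ a c ∧ relPow ρ (pathDist ρ a b - 1) c b := by
    rw [hn] at hmin ⊢
    exact hmin
  rw [stepToward, dif_pos hstep]
  obtain ⟨hac, hcb⟩ := hstep.choose_spec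
  have hle : pathDist ρ hstep.choose b ≤ pathDist ρ a b - 1 := Nat.sInf_le hcb
  exact ⟨hac, reflTransGen_of_relPow hcb, by omega⟩

end StepToward

section Walk

variable (ρ : α → α → Prop) (z : ℕ → α)

open Classical in
/-- Walks along shortest `ρ`-paths through `z 0, z 1, …`; the second component is the index of
the point currently aimed at. -/
noncomputable def walk : ℕ → α × ℕ
  | 0 => (z 0, 0)
  | m + 1 =>
    let w := walk m
    if w.1 = z w.2 then (w.1, w.2 + 1) else (stepToward ρ w.1 (z w.2), w.2)

variable {ρ z}

theorem walk_reflTransGen (hz : ∀ n, ReflTransGen ρ (z n) (z (n + 1))) (m : ℕ) :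
    ReflTransGen ρ (walk ρ z m).1 (z (walk ρ z m).2) := by
  induction m with
  | zero => exact .refl
  | succ m ih =>
    by_cases h : (walk ρ z m).1 = z (walk ρ z m).2
    · simp only [walk, if_pos h]
      exact h ▸ hz _
    · simp only [walk, if_neg h]
      exact (stepToward_spec ih h).2.1

theorem walk_reflGen (hz : ∀ n, ReflTransGen ρ (z n) (z (n + 1))) (m : ℕ) :
    ReflGen ρ (walk ρ z m).1 (walk ρ z (m + 1)).1 := by
  by_cases h : (walk ρ z m).1 = z (walk ρ z m).2
  · simp only [walk, if_pos h]
    exact .refl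
  · simp only [walk, if_neg h]
    exact .single (stepToward_spec (walk_reflTransGen hz m) h).1

theorem exists_walk_eq_target (hz : ∀ n, ReflTransGen ρ (z n) (z (n + 1))) (m : ℕ) :
    ∃ m', walk ρ z m' = (z (walk ρ z m).2, (walk ρ z m).2) := by
  induction hd : pathDist ρ (walk ρ z m).1 (z (walk ρ z m).2) using Nat.strong_induction_on
    generalizing m with
  | _ d ih =>
    by_cases h : (walk ρ z m).1 = z (walk ρ z m).2
    · exact ⟨m, Prod.ext h rfl⟩
    · have hstep := stepToward_spec (walk_reflTransGen hz m) h
      have hnext : walk ρ z (m + 1) =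
          (stepToward ρ (walk ρ z m).1 (z (walk ρ z m).2), (walk ρ z m).2) := by
        simp only [walk, if_neg h]
      obtain ⟨m', hm'⟩ := ih _ (hd ▸ hnext ▸ hstep.2.2) (m + 1) rfl
      exact ⟨m', by rw [hm', hnext]⟩

theorem exists_walk_eq (hz : ∀ n, ReflTransGen ρ (z n) (z (n + 1))) (n : ℕ) :
    ∃ m, walk ρ z m = (z n, n) := by
  induction n with
  | zero => exact ⟨0, rfl⟩
  | succ n ih =>
    obtain ⟨m, hm⟩ := ih
    have hnext : walk ρ z (m + 1) = (z n, n + 1) := by simp [walk, hm]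
    simpa [hnext] using exists_walk_eq_target hz (m + 1)

theorem exists_reflGen_path_through (hz : ∀ n, ReflTransGen ρ (z n) (z (n + 1))) :
    ∃ p : ℕ → α, p 0 = z 0 ∧ (∀ m, ReflGen ρ (p m) (p (m + 1))) ∧
      ∀ n, ∃ m, p m = z n :=
  ⟨fun m => (walk ρ z m).1, rfl, walk_reflGen hz,
    fun n => (exists_walk_eq hz n).imp fun _ hm => congrArg Prod.fst hm⟩

end Walk

section Cofinal

variable {r : α → α → Prop}

theorem eqvGen_le_join
    (hconf : ∀ a b c, ReflTransGen r a b → ReflTransGen r a c → Join (ReflTransGen r) b c) :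
    EqvGen r ≤ Join (ReflTransGen r) :=
  haveI := (equivalence_join hconf).isEquiv
  EqvGen.eqvGen_le fun _ b h => ⟨b, .single h, .refl⟩

variable (r)

open Classical in
noncomputable def joinSeq (q : ℕ → α) (β : α) : ℕ → α
  | 0 => β
  | n + 1 => if h : Join (ReflTransGen r) (joinSeq q β n) (q n) then h.choose else joinSeq q β n

variable {r}

theorem joinSeq_step (q : ℕ → α) (β : α) (n : ℕ) :
    ReflTransGen r (joinSeq r q β n) (joinSeq r q β (n + 1)) := by
  rw [joinSeq]
  split_ifs with h
  exacts [h.choose_spec.1, .refl]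

theorem eqvGen_joinSeq (q : ℕ → α) (β : α) (n : ℕ) : EqvGen r β (joinSeq r q β n) := by
  induction n with
  | zero => exact .refl _
  | succ n ih => exact ih.trans _ _ _ (EqvGen.reflTransGen_le_eqvGen _ _ _ (joinSeq_step q β n))

theorem exists_cofinal_seq [Countable α]
    (hconf : ∀ a b c, ReflTransGen r a b → ReflTransGen r a c → Join (ReflTransGen r) b c)
    (β : α) :
    ∃ z : ℕ → α, z 0 = β ∧ (∀ n, ReflTransGen r (z n) (z (n + 1))) ∧
      ∀ x, EqvGen r β x → ∃ n, ReflTransGen r x (z n) := by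
  have : Nonempty α := ⟨β⟩
  obtain ⟨q, hq⟩ := exists_surjective_nat α
  refine ⟨joinSeq r q β, rfl, joinSeq_step q β, fun x hx => ?_⟩
  obtain ⟨n, rfl⟩ := hq x
  have hjoin : Join (ReflTransGen r) (joinSeq r q β n) (q n) :=
    eqvGen_le_join hconf _ _ ((eqvGen_joinSeq q β n).symm _ _ |>.trans _ _ _ hx)
  refine ⟨n + 1, ?_⟩
  rw [joinSeq, dif_pos hjoin]
  exact hjoin.choose_spec.2

theorem exists_cofinal_path [Countable α]
    (hconf : ∀ a b c, ReflTransGen r a b → ReflTransGen r a c → Join (ReflTransGen r) b c)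
    (β : α) :
    ∃ p : ℕ → α, p 0 = β ∧ (∀ n, ReflGen r (p n) (p (n + 1))) ∧
      ∀ x, EqvGen r β x → ∃ n, ReflTransGen r x (p n) := by
  obtain ⟨z, rfl, hz, hcof⟩ := exists_cofinal_seq hconf β
  obtain ⟨p, hp0, hp, hpz⟩ := exists_reflGen_path_through hz
  refine ⟨p, hp0, hp, fun x hx => ?_⟩
  obtain ⟨n, hn⟩ := hcof x hx
  obtain ⟨m, hm⟩ := hpz n
  exact ⟨m, hm ▸ hn⟩

end Cofinal

section PathForest

variable (r : α → α → Prop) (p : ℕ → α)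

def basin : Set α := {x | ∃ n, ReflTransGen r x (p n)}

/-- `0` outside the basin. -/
noncomputable def level (x : α) : ℕ := sInf {n | ReflTransGen r x (p n)}

def IsExit (n : ℕ) : Prop := level r p (p n) < level r p (p (n + 1))

open Classical in
/-- Every element of level `v` is routed to this point. -/
noncomputable def levelTarget (v : ℕ) : α :=
  if h : ∃ n, level r p (p n) = v ∧ IsExit r p n then p h.choose else p v

def pathForest (x y : α) : Prop :=
  (∃ n, IsExit r p n ∧ x = p n ∧ y = p (n + 1)) ∨
    (x ∈ basin r p ∧ x ≠ levelTarget r p (level r p x) ∧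
      y = stepToward r x (levelTarget r p (level r p x)))

noncomputable def forestRank (x : α) : ℕ ×ₗ ℕᵒᵈ :=
  toLex (level r p x, OrderDual.toDual (pathDist r x (levelTarget r p (level r p x))))

variable {r p}

theorem path_mem_basin (n : ℕ) : p n ∈ basin r p := ⟨n, .refl⟩

theorem mem_basin_of_reflTransGen {x y : α} (hxy : ReflTransGen r x y) (hy : y ∈ basin r p) :
    x ∈ basin r p :=
  hy.imp fun _ h => hxy.trans h

theorem level_spec {x : α} (hx : x ∈ basin r p) : ReflTransGen r x (p (level r p x)) :=
  Nat.sInf_mem hx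

theorem level_le {x : α} {n : ℕ} (h : ReflTransGen r x (p n)) : level r p x ≤ n :=
  Nat.sInf_le h

theorem level_le_level {x y : α} (hxy : ReflTransGen r x y) (hy : y ∈ basin r p) :
    level r p x ≤ level r p y :=
  level_le (hxy.trans (level_spec hy))

theorem level_path_le (n : ℕ) : level r p (p n) ≤ n :=
  level_le .refl

theorem level_path_level {x : α} (hx : x ∈ basin r p) :
    level r p (p (level r p x)) = level r p x :=
  le_antisymm (level_path_le _) (level_le_level (level_spec hx) (path_mem_basin _))

theorem levelTarget_mem_basin (v : ℕ) : levelTarget r p v ∈ basin r p := by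
  unfold levelTarget
  split_ifs <;> exact path_mem_basin _

theorem reflTransGen_path (hp : ∀ n, ReflGen r (p n) (p (n + 1)))
    {m n : ℕ} (h : m ≤ n) : ReflTransGen r (p m) (p n) := by
  induction h with
  | refl => exact .refl
  | step _ ih => exact ih.trans (hp _).to_reflTransGen

theorem level_path_mono (hp : ∀ n, ReflGen r (p n) (p (n + 1)))
    {m n : ℕ} (h : m ≤ n) : level r p (p m) ≤ level r p (p n) :=
  level_le_level (reflTransGen_path hp h) (path_mem_basin n)

theorem eqvGen_of_mem_basin (hp : ∀ n, ReflGen r (p n) (p (n + 1)))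
    {x : α} (hx : x ∈ basin r p) : EqvGen r (p 0) x := by
  obtain ⟨n, hn⟩ := hx
  exact (EqvGen.reflTransGen_le_eqvGen r _ _ (reflTransGen_path hp n.zero_le)).trans _ _ _
    ((EqvGen.reflTransGen_le_eqvGen r _ _ hn).symm _ _)

/-- Levels along the path never decrease, so each level is left at most once. -/
theorem IsExit.eq (hp : ∀ n, ReflGen r (p n) (p (n + 1)))
    {m n : ℕ} (hm : IsExit r p m) (hn : IsExit r p n)
    (h : level r p (p m) = level r p (p n)) : m = n := by
  have key : ∀ {i j}, IsExit r p i → level r p (p i) = level r p (p j) → ¬ i < j :=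
    fun hi hij hlt => (level_path_mono hp hlt).not_gt (hij ▸ hi)
  rcases lt_trichotomy m n with hlt | heq | hgt
  exacts [absurd hlt (key hm h), heq, absurd hgt (key hn h.symm)]

theorem levelTarget_of_isExit (hp : ∀ n, ReflGen r (p n) (p (n + 1)))
    {n : ℕ} (hn : IsExit r p n) : levelTarget r p (level r p (p n)) = p n := by
  have h : ∃ m, level r p (p m) = level r p (p n) ∧ IsExit r p m := ⟨n, rfl, hn⟩
  rw [levelTarget, dif_pos h, h.choose_spec.2.eq hp hn h.choose_spec.1]

theorem reflTransGen_levelTarget (hp : ∀ n, ReflGen r (p n) (p (n + 1)))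
    {x : α} (hx : x ∈ basin r p) :
    ReflTransGen r x (levelTarget r p (level r p x)) ∧
      level r p (levelTarget r p (level r p x)) = level r p x := by
  unfold levelTarget
  split_ifs with h
  · obtain ⟨hlevel, -⟩ := h.choose_spec
    have hle : level r p x ≤ h.choose := hlevel.ge.trans (level_path_le _)
    exact ⟨(level_spec hx).trans (reflTransGen_path hp hle), hlevel⟩
  · exact ⟨level_spec hx, level_path_level hx⟩

theorem stepToward_levelTarget (hp : ∀ n, ReflGen r (p n) (p (n + 1)))
    {x : α} (hx : x ∈ basin r p)
    (hne : x ≠ levelTarget r p (level r p x)) :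
    stepToward r x (levelTarget r p (level r p x)) ∈ basin r p ∧
      level r p (stepToward r x (levelTarget r p (level r p x))) = level r p x ∧
      pathDist r (stepToward r x (levelTarget r p (level r p x))) (levelTarget r p (level r p x)) <
        pathDist r x (levelTarget r p (level r p x)) := by
  obtain ⟨hxt, hlevel⟩ := reflTransGen_levelTarget hp hx
  obtain ⟨hstep, hyt, hdist⟩ := stepToward_spec hxt hne
  have hy := mem_basin_of_reflTransGen hyt (levelTarget_mem_basin _)
  refine ⟨hy, le_antisymm ?_ (level_le_level (.single hstep) hy), hdist⟩
  exact (level_le_level hyt (levelTarget_mem_basin _)).trans hlevel.le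

theorem pathForest_le (hp : ∀ n, ReflGen r (p n) (p (n + 1))) :
    pathForest r p ≤ r := by
  rintro x y (⟨n, hn, rfl, rfl⟩ | ⟨hx, hne, rfl⟩)
  · rcases (reflGen_iff _ _ _).mp (hp n) with h | h
    · rw [IsExit, h] at hn
      exact absurd hn (lt_irrefl _)
    · exact h
  · exact (stepToward_spec (reflTransGen_levelTarget hp hx).1 hne).1

theorem pathForest_mem_basin {x y : α} (h : pathForest r p x y) : x ∈ basin r p := by
  rcases h with ⟨n, -, rfl, -⟩ | ⟨hx, -⟩
  exacts [path_mem_basin n, hx]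

theorem forestRank_lt (hp : ∀ n, ReflGen r (p n) (p (n + 1)))
    {x y : α} (h : pathForest r p x y) : forestRank r p x < forestRank r p y := by
  rw [forestRank, forestRank, Prod.Lex.toLex_lt_toLex]
  rcases h with ⟨n, hn, rfl, rfl⟩ | ⟨hx, hne, rfl⟩
  · exact .inl hn
  · obtain ⟨-, hlevel, hdist⟩ := stepToward_levelTarget hp hx hne
    have htarget := congrArg (levelTarget r p) hlevel
    refine .inr ⟨hlevel.symm, ?_⟩
    rw [htarget]
    exact hdist

theorem isForest_pathForest (hp : ∀ n, ReflGen r (p n) (p (n + 1))) :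
    IsForest (pathForest r p) where
  deterministic x y y' h h' := by
    rcases h with ⟨n, hn, rfl, rfl⟩ | ⟨hx, hne, rfl⟩ <;>
      rcases h' with ⟨m, hm, hxm, rfl⟩ | ⟨-, hne', rfl⟩
    · rw [hn.eq hp hm (congrArg (level r p) hxm)]
    · exact absurd (levelTarget_of_isExit hp hn).symm hne'
    · exact absurd (hxm ▸ (levelTarget_of_isExit hp hm).symm) hne
    · rfl
  acyclic x h := by
    have hlt := TransGen.lift (p := (· < ·)) (forestRank r p) (fun _ _ => forestRank_lt hp) x x h
    rw [transGen_eq_self] at hlt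
    exact lt_irrefl _ hlt

theorem reflTransGen_pathForest_levelTarget (hp : ∀ n, ReflGen r (p n) (p (n + 1)))
    {x : α} (hx : x ∈ basin r p) :
    ReflTransGen (pathForest r p) x (levelTarget r p (level r p x)) := by
  induction hd : pathDist r x (levelTarget r p (level r p x)) using Nat.strong_induction_on
    generalizing x with
  | _ d ih =>
    by_cases hne : x = levelTarget r p (level r p x)
    · exact hne ▸ .refl
    · obtain ⟨hy, hlevel, hdist⟩ := stepToward_levelTarget hp hx hne
      have hrest := ih _ (by rw [hlevel, ← hd]; exact hdist) hy rfl
      rw [hlevel] at hrest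
      exact .head (.inr ⟨hx, hne, rfl⟩) hrest

theorem eqvGen_pathForest_levelTarget (hp : ∀ n, ReflGen r (p n) (p (n + 1)))
    (n : ℕ) :
    EqvGen (pathForest r p) (levelTarget r p (level r p (p 0)))
      (levelTarget r p (level r p (p n))) := by
  induction n with
  | zero => exact .refl _
  | succ n ih =>
    by_cases hlevel : level r p (p (n + 1)) = level r p (p n)
    · rwa [hlevel]
    have hn : IsExit r p n := lt_of_le_of_ne (level_path_mono hp n.le_succ) (Ne.symm hlevel)
    have hexit : pathForest r p (p n) (p (n + 1)) := .inl ⟨n, hn, rfl, rfl⟩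
    refine ih.trans _ _ _ ?_
    rw [levelTarget_of_isExit hp hn]
    exact (EqvGen.rel _ _ hexit).trans _ _ _ (EqvGen.reflTransGen_le_eqvGen _ _ _
      (reflTransGen_pathForest_levelTarget hp (path_mem_basin _)))

theorem eqvGen_pathForest (hp : ∀ n, ReflGen r (p n) (p (n + 1)))
    {x : α} (hx : x ∈ basin r p) : EqvGen (pathForest r p) (p 0) x := by
  have h0 := EqvGen.reflTransGen_le_eqvGen _ _ _
    (reflTransGen_pathForest_levelTarget hp (path_mem_basin (p := p) 0))
  have hx' := EqvGen.reflTransGen_le_eqvGen _ _ _ (reflTransGen_pathForest_levelTarget hp hx)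
  have hmid := eqvGen_pathForest_levelTarget hp (level r p x)
  rw [level_path_level hx] at hmid
  exact (h0.trans _ _ _ hmid).trans _ _ _ (hx'.symm _ _)

end PathForest

theorem exists_forest_of_forall_class {r : α → α → Prop}
    (h : ∀ β, ∃ s ≤ r, IsForest s ∧ (∀ x y, s x y → EqvGen r β x) ∧
      ∀ x, EqvGen r β x → EqvGen s β x) :
    ∃ s ≤ r, IsForest s ∧ ∀ a b, EqvGen s a b ↔ EqvGen r a b := by
  choose S hSr hS hSupp hSpan using h
  let rep : α → α := fun x => (Quot.mk r x).out
  have hrep (x : α) : EqvGen r (rep x) x := Quot.eqvGen_exact (Quot.out_eq _)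
  have hrep_eq {x y : α} (hxy : EqvGen r x y) : rep x = rep y :=
    congrArg Quot.out (Quot.eqvGen_sound hxy)
  let T : α → α → Prop := fun x y => S (rep x) x y
  have hTr : T ≤ r := fun x y => hSr _ x y
  have hST {β x y : α} (hxy : S (rep β) x y) : T x y := by
    have : rep x = rep β := (hrep_eq (hSupp _ x y hxy)).symm.trans (hrep_eq (hrep β))
    simpa only [T, this] using hxy
  have hTS {x y : α} (hxy : TransGen T x y) : TransGen (S (rep x)) x y := by
    induction hxy with
    | single hxy => exact .single hxy
    | @tail b c hxb hbc ih =>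
      have : rep b = rep x :=
        (hrep_eq (EqvGen.transGen_le_eqvGen r _ _ (TransGen.mono hTr _ _ hxb))).symm
      exact ih.tail (this ▸ hbc)
  refine ⟨T, hTr, ⟨fun a b c h h' => (hS _).deterministic a b c h h',
    fun a ha => (hS _).acyclic a (hTS ha)⟩, fun a b => ⟨EqvGen.mono hTr _ _, fun hab => ?_⟩⟩
  have hspan {x : α} (hx : EqvGen r (rep a) x) : EqvGen T (rep a) x :=
    EqvGen.mono (fun _ _ => hST) _ _ (hSpan _ x hx)
  exact ((hspan (hrep a)).symm _ _).trans _ _ _ (hspan ((hrep a).trans _ _ _ hab))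

theorem exists_forest_spanning_class [Countable α] {r : α → α → Prop}
    (hconf : ∀ a b c, ReflTransGen r a b → ReflTransGen r a c → Join (ReflTransGen r) b c)
    (β : α) :
    ∃ s ≤ r, IsForest s ∧ (∀ x y, s x y → EqvGen r β x) ∧
      ∀ x, EqvGen r β x → EqvGen s β x := by
  obtain ⟨p, rfl, hp, hcof⟩ := exists_cofinal_path hconf β
  exact ⟨pathForest r p, pathForest_le hp, isForest_pathForest hp,
    fun x _ h => eqvGen_of_mem_basin hp (pathForest_mem_basin h),
    fun x hx => eqvGen_pathForest hp (hcof x hx)⟩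

theorem conv_eq_eqvGen (r : α → α → Prop) : Conv r = EqvGen r :=
  EqvGen.reflTransGen_symmGen r

end Rewriting

/-- Every countable confluent rewrite relation has a spanning forest. -/
theorem stmt_2 {α : Type*} [Countable α] (r : α → α → Prop)
    (hconf : ∀ a b c, Relation.ReflTransGen r a b → Relation.ReflTransGen r a c →
      ∃ d, Relation.ReflTransGen r b d ∧ Relation.ReflTransGen r c d) :
    ∃ s : α → α → Prop,
      (∀ a b, s a b → r a b) ∧
      (∀ a b, Conv s a b ↔ Conv r a b) ∧
      (∀ a b c, s a b → s a c → b = c) ∧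
      (∀ a, ¬ Relation.TransGen s a a) := by
  obtain ⟨s, hsr, hs, hspan⟩ := Rewriting.exists_forest_of_forall_class
    (Rewriting.exists_forest_spanning_class hconf)
  refine ⟨s, hsr, fun a b => ?_, hs.deterministic, hs.acyclic⟩
  rw [Rewriting.conv_eq_eqvGen, Rewriting.conv_eq_eqvGen]
  exact hspan a b
end

section
/- Let α be a countable type and r a confluent binary relation on α such that any two elements are r-convertible (for all a, b: a ↔*_r b). Then r has a spanning tree: there exists a relation s on α such that (1) s is a subrelation of r, (2) s is deterministic (s a b and s a c imply b = c), (3) s is acyclic (the transitive closure of s is irreflexive), and (4) any two elements have a common s-reduct: for all a, b there exists c with s* a c and s* b c. -/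
open Relation

section SpanningTree

variable {α : Type*} {r : α → α → Prop}

structure IsSpanningTree (r s : α → α → Prop) : Prop where
  le : ∀ a b, s a b → r a b
  deterministic : ∀ a b c, s a b → s a c → b = c
  acyclic : ∀ a, ¬ TransGen s a a
  join : ∀ a b, Join (ReflTransGen s) a b

theorem not_transGen_self_of_lt {β : Type*} [Preorder β] {s : α → α → Prop} (f : α → β)
    (hf : ∀ a b, s a b → f a < f b) (a : α) : ¬ TransGen s a a := fun h =>
  lt_irrefl (f a) <| by simpa only [transGen_eq_self] using h.lift (p := (· < ·)) f hf

theorem join_of_conv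
    (hconf : ∀ a b c, ReflTransGen r a b → ReflTransGen r a c → Join (ReflTransGen r) b c)
    {a b : α} (h : Conv r a b) : Join (ReflTransGen r) a b := by
  have := isTrans_join hconf
  refine reflTransGen_le_of_le (fun x y hxy => ?_) a b h
  rcases hxy with hxy | hyx
  exacts [⟨y, .single hxy, .refl⟩, ⟨x, .refl, .single hyx⟩]

def ReachIn (r : α → α → Prop) : ℕ → α → α → Prop
  | 0, a, b => a = b
  | n + 1, a, b => ∃ c, r a c ∧ ReachIn r n c b

theorem ReachIn.reflTransGen : ∀ {n : ℕ} {a b : α}, ReachIn r n a b → ReflTransGen r a b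
  | 0, _, _, rfl => .refl
  | _ + 1, _, _, ⟨_, hac, hcb⟩ => .head hac hcb.reflTransGen

theorem exists_reachIn_of_reflTransGen {a b : α} (h : ReflTransGen r a b) :
    ∃ n, ReachIn r n a b := by
  induction h using ReflTransGen.head_induction_on with
  | refl => exact ⟨0, rfl⟩
  | head hac _ ih => obtain ⟨n, hn⟩ := ih; exact ⟨n + 1, _, hac, hn⟩

-- junk value `0` when `b` is not reachable from `a`
noncomputable def relDist (r : α → α → Prop) (a b : α) : ℕ := sInf {n | ReachIn r n a b}

theorem exists_rel_relDist_lt {a b : α} (h : ReflTransGen r a b) (hne : a ≠ b) :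
    ∃ c, r a c ∧ ReflTransGen r c b ∧ relDist r c b < relDist r a b := by
  have hmin : ReachIn r (relDist r a b) a b := Nat.sInf_mem (exists_reachIn_of_reflTransGen h)
  obtain ⟨n, hn⟩ : ∃ n, relDist r a b = n + 1 :=
    Nat.exists_eq_succ_of_ne_zero fun h0 => hne (by rw [h0] at hmin; exact hmin)
  rw [hn] at hmin ⊢
  obtain ⟨c, hac, hcb⟩ := hmin
  exact ⟨c, hac, hcb.reflTransGen, Nat.lt_succ_of_le (Nat.sInf_le hcb)⟩

noncomputable def stepToward (r : α → α → Prop) (b a : α) : α :=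
  @Classical.epsilon α ⟨a⟩ fun c => r a c ∧ ReflTransGen r c b ∧ relDist r c b < relDist r a b

theorem stepToward_spec {a b : α} (h : ReflTransGen r a b) (hne : a ≠ b) :
    r a (stepToward r b a) ∧ ReflTransGen r (stepToward r b a) b ∧
      relDist r (stepToward r b a) b < relDist r a b :=
  Classical.epsilon_spec (exists_rel_relDist_lt h hne)

theorem isSpanningTree_of_sink {z : α} (hz : ∀ a, ReflTransGen r a z) :
    IsSpanningTree r fun a b => a ≠ z ∧ stepToward r z a = b := by
  have hroot : ∀ a, ReflTransGen (fun a b => a ≠ z ∧ stepToward r z a = b) a z := by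
    intro a
    induction hd : relDist r a z using Nat.strong_induction_on generalizing a with
    | _ d ih =>
      by_cases ha : a = z
      · exact ha ▸ .refl
      · exact .head ⟨ha, rfl⟩ (ih _ (hd ▸ (stepToward_spec (hz a) ha).2.2) _ rfl)
  refine ⟨?_, ?_, ?_, fun a b => ⟨z, hroot a, hroot b⟩⟩
  · rintro a _ ⟨ha, rfl⟩
    exact (stepToward_spec (hz a) ha).1
  · rintro a _ _ ⟨-, rfl⟩ ⟨-, rfl⟩
    rfl
  · refine not_transGen_self_of_lt (fun a => OrderDual.toDual (relDist r a z)) ?_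
    rintro a _ ⟨ha, rfl⟩
    exact OrderDual.toDual_lt_toDual.2 (stepToward_spec (hz a) ha).2.2

section ExitWalk

variable (r) (p : ℕ → α)

def IsExit (i : ℕ) : Prop := ¬ ReflTransGen r (p (i + 1)) (p i)

noncomputable def firstExit (a : α) : ℕ := sInf {i | IsExit r p i ∧ ReflTransGen r a (p i)}

open Classical in
noncomputable def exitWalk (a : α) : α :=
  if a = p (firstExit r p a) then p (firstExit r p a + 1)
  else stepToward r (p (firstExit r p a)) a

variable {r p}

theorem reflTransGen_path_of_le (hp : ∀ n, ReflGen r (p n) (p (n + 1))) {i j : ℕ} (hij : i ≤ j) :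
    ReflTransGen r (p i) (p j) := by
  induction j, hij using Nat.le_induction with
  | base => exact .refl
  | succ j _ ih => exact ih.trans (hp j).to_reflTransGen

theorem rel_succ_of_isExit (hp : ∀ n, ReflGen r (p n) (p (n + 1))) {i : ℕ} (hi : IsExit r p i) :
    r (p i) (p (i + 1)) :=
  ((reflGen_iff _ _ _).1 (hp i)).resolve_left fun h => hi (h ▸ .refl)

theorem reflTransGen_of_forall_not_isExit (hp : ∀ n, ReflGen r (p n) (p (n + 1)))
    (hcof : ∀ b, ∃ n, ReflTransGen r b (p n)) {a : α} {n : ℕ} (han : ReflTransGen r a (p n))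
    (hno : ∀ i, IsExit r p i → ¬ ReflTransGen r a (p i)) (b : α) : ReflTransGen r b (p n) := by
  have hback : ∀ m, n ≤ m → ReflTransGen r (p m) (p n) := by
    intro m hm
    induction m, hm using Nat.le_induction with
    | base => exact .refl
    | succ m hm ih =>
      exact (not_not.1 fun h => hno m h (han.trans (reflTransGen_path_of_le hp hm))).trans ih
  obtain ⟨m, hm⟩ := hcof b
  exact (hm.trans (reflTransGen_path_of_le hp (le_max_left m n))).trans (hback _ (le_max_right m n))

theorem firstExit_spec (hreach : ∀ a, ∃ i, IsExit r p i ∧ ReflTransGen r a (p i)) (a : α) :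
    IsExit r p (firstExit r p a) ∧ ReflTransGen r a (p (firstExit r p a)) :=
  Nat.sInf_mem (hreach a)

theorem firstExit_le {a : α} {i : ℕ} (hi : IsExit r p i) (ha : ReflTransGen r a (p i)) :
    firstExit r p a ≤ i :=
  Nat.sInf_le ⟨hi, ha⟩

theorem firstExit_mono (hreach : ∀ a, ∃ i, IsExit r p i ∧ ReflTransGen r a (p i)) {a b : α}
    (hab : ReflTransGen r a b) : firstExit r p a ≤ firstExit r p b :=
  firstExit_le (firstExit_spec hreach b).1 (hab.trans (firstExit_spec hreach b).2)

theorem le_firstExit (hp : ∀ n, ReflGen r (p n) (p (n + 1)))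
    (hreach : ∀ a, ∃ i, IsExit r p i ∧ ReflTransGen r a (p i)) (i : ℕ) :
    i ≤ firstExit r p (p i) := by
  by_contra! h
  obtain ⟨hexit, hback⟩ := firstExit_spec hreach (p i)
  exact hexit ((reflTransGen_path_of_le hp h).trans hback)

theorem firstExit_firstExit (hreach : ∀ a, ∃ i, IsExit r p i ∧ ReflTransGen r a (p i)) (a : α) :
    firstExit r p (p (firstExit r p a)) = firstExit r p a :=
  le_antisymm (firstExit_le (firstExit_spec hreach a).1 .refl)
    (firstExit_mono hreach (firstExit_spec hreach a).2)

theorem rel_exitWalk (hp : ∀ n, ReflGen r (p n) (p (n + 1)))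
    (hreach : ∀ a, ∃ i, IsExit r p i ∧ ReflTransGen r a (p i)) (a : α) :
    r a (exitWalk r p a) := by
  unfold exitWalk
  split_ifs with h
  · nth_rewrite 1 [h]
    exact rel_succ_of_isExit hp (firstExit_spec hreach a).1
  · exact (stepToward_spec (firstExit_spec hreach a).2 h).1

theorem firstExit_lt_exitWalk (hp : ∀ n, ReflGen r (p n) (p (n + 1)))
    (hreach : ∀ a, ∃ i, IsExit r p i ∧ ReflTransGen r a (p i)) {a : α}
    (h : a = p (firstExit r p a)) : firstExit r p a < firstExit r p (exitWalk r p a) := by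
  rw [exitWalk, if_pos h]
  exact le_firstExit hp hreach _

theorem firstExit_exitWalk_of_ne (hreach : ∀ a, ∃ i, IsExit r p i ∧ ReflTransGen r a (p i))
    {a : α} (h : a ≠ p (firstExit r p a)) :
    firstExit r p (exitWalk r p a) = firstExit r p a ∧
      relDist r (exitWalk r p a) (p (firstExit r p a)) < relDist r a (p (firstExit r p a)) := by
  obtain ⟨hexit, ha⟩ := firstExit_spec hreach a
  obtain ⟨hstep, hto, hlt⟩ := stepToward_spec ha h
  rw [exitWalk, if_neg h]
  exact ⟨le_antisymm (firstExit_le hexit hto) (firstExit_mono hreach (.single hstep)), hlt⟩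

theorem reflTransGen_exitWalk_firstExit
    (hreach : ∀ a, ∃ i, IsExit r p i ∧ ReflTransGen r a (p i)) (a : α) :
    ReflTransGen (fun x y => exitWalk r p x = y) a (p (firstExit r p a)) := by
  induction hd : relDist r a (p (firstExit r p a)) using Nat.strong_induction_on generalizing a with
  | _ d ih =>
    by_cases h : a = p (firstExit r p a)
    · rw [← h]
    · obtain ⟨hK, hlt⟩ := firstExit_exitWalk_of_ne hreach h
      have hwalk := ih _ (by rw [hK, ← hd]; exact hlt) (exitWalk r p a) rfl
      rw [hK] at hwalk
      exact .head rfl hwalk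

theorem reflTransGen_exitWalk_of_le (hp : ∀ n, ReflGen r (p n) (p (n + 1)))
    (hreach : ∀ a, ∃ i, IsExit r p i ∧ ReflTransGen r a (p i)) {j : ℕ} (hj : IsExit r p j)
    {a : α} (ha : firstExit r p a ≤ j) :
    ReflTransGen (fun x y => exitWalk r p x = y) a (p j) := by
  induction hd : j - firstExit r p a using Nat.strong_induction_on generalizing a with
  | _ d ih =>
    have hexit := reflTransGen_exitWalk_firstExit hreach a
    rcases ha.eq_or_lt with heq | hlt
    · rwa [heq] at hexit
    · have hK := firstExit_firstExit hreach a
      have hstep : exitWalk r p (p (firstExit r p a)) = p (firstExit r p a + 1) := by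
        rw [exitWalk, if_pos (by rw [hK]), hK]
      have hle : firstExit r p (p (firstExit r p a + 1)) ≤ j :=
        firstExit_le hj (reflTransGen_path_of_le hp hlt)
      have hgt := le_firstExit hp hreach (firstExit r p a + 1)
      exact hexit.trans (.head hstep (ih _ (by omega) hle rfl))

theorem isSpanningTree_exitWalk (hp : ∀ n, ReflGen r (p n) (p (n + 1)))
    (hreach : ∀ a, ∃ i, IsExit r p i ∧ ReflTransGen r a (p i)) :
    IsSpanningTree r fun a b => exitWalk r p a = b := by
  refine ⟨?_, ?_, ?_, fun a b => ?_⟩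
  · rintro a _ rfl
    exact rel_exitWalk hp hreach a
  · rintro a _ _ rfl rfl
    rfl
  · refine not_transGen_self_of_lt (fun a => toLex (firstExit r p a,
      OrderDual.toDual (relDist r a (p (firstExit r p a))))) ?_
    rintro a _ rfl
    rw [Prod.Lex.toLex_lt_toLex]
    by_cases h : a = p (firstExit r p a)
    · exact .inl (firstExit_lt_exitWalk hp hreach h)
    · obtain ⟨hK, hlt⟩ := firstExit_exitWalk_of_ne hreach h
      exact .inr ⟨hK.symm, OrderDual.toDual_lt_toDual.2 (by rw [hK]; exact hlt)⟩
  · rcases le_total (firstExit r p a) (firstExit r p b) with hab | hba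
    · exact ⟨_, reflTransGen_exitWalk_of_le hp hreach (firstExit_spec hreach b).1 hab,
        reflTransGen_exitWalk_firstExit hreach b⟩
    · exact ⟨_, reflTransGen_exitWalk_firstExit hreach a,
        reflTransGen_exitWalk_of_le hp hreach (firstExit_spec hreach a).1 hba⟩

end ExitWalk

-- The state `(x, k)` is the current position `x` and the index `k` of the current target `c k`.
open Classical in
noncomputable def chainWalk (r : α → α → Prop) (c : ℕ → α) (q : α × ℕ) : α × ℕ :=
  if q.1 = c q.2 then (q.1, q.2 + 1) else (stepToward r (c q.2) q.1, q.2)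

theorem chainWalk_spec {c : ℕ → α} (hc : ∀ n, ReflTransGen r (c n) (c (n + 1))) {q : α × ℕ}
    (hq : ReflTransGen r q.1 (c q.2)) :
    ReflGen r q.1 (chainWalk r c q).1 ∧
      ReflTransGen r (chainWalk r c q).1 (c (chainWalk r c q).2) := by
  unfold chainWalk
  split_ifs with h
  · exact ⟨.refl, h ▸ hc q.2⟩
  · obtain ⟨hstep, hreach, -⟩ := stepToward_spec hq h
    exact ⟨.single hstep, hreach⟩

theorem exists_iterate_chainWalk_eq {c : ℕ → α} {x : α} {k : ℕ} (h : ReflTransGen r x (c k)) :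
    ∃ m, (chainWalk r c)^[m] (x, k) = (c k, k) := by
  induction hd : relDist r x (c k) using Nat.strong_induction_on generalizing x with
  | _ d ih =>
    by_cases hx : x = c k
    · exact ⟨0, by rw [hx]; rfl⟩
    · obtain ⟨-, hreach, hlt⟩ := stepToward_spec h hx
      obtain ⟨m, hm⟩ := ih _ (hd ▸ hlt) hreach rfl
      refine ⟨m + 1, ?_⟩
      rw [Function.iterate_succ_apply, chainWalk, if_neg hx]
      exact hm

theorem exists_reflGen_path_through {c : ℕ → α} (hc : ∀ n, ReflTransGen r (c n) (c (n + 1))) :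
    ∃ p : ℕ → α, (∀ n, ReflGen r (p n) (p (n + 1))) ∧ ∀ k, ∃ n, p n = c k := by
  let q : ℕ → α × ℕ := fun n => (chainWalk r c)^[n] (c 0, 0)
  have hq_succ : ∀ n, q (n + 1) = chainWalk r c (q n) := fun n =>
    Function.iterate_succ_apply' _ _ _
  have hq : ∀ n, ReflTransGen r (q n).1 (c (q n).2) := by
    intro n
    induction n with
    | zero => exact .refl
    | succ n ih => rw [hq_succ]; exact (chainWalk_spec hc ih).2
  have hhit : ∀ k, ∃ n, q n = (c k, k) := by
    intro k
    induction k with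
    | zero => exact ⟨0, rfl⟩
    | succ k ih =>
      obtain ⟨n, hn⟩ := ih
      have hnext : q (n + 1) = (c k, k + 1) := by rw [hq_succ, hn, chainWalk, if_pos rfl]
      obtain ⟨m, hm⟩ := exists_iterate_chainWalk_eq (hc k)
      have hadd : q (m + (n + 1)) = (chainWalk r c)^[m] (q (n + 1)) :=
        Function.iterate_add_apply _ _ _ _
      exact ⟨m + (n + 1), by rw [hadd, hnext, hm]⟩
  refine ⟨fun n => (q n).1, fun n => ?_, fun k => ?_⟩
  · show ReflGen r (q n).1 (q (n + 1)).1
    rw [hq_succ]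
    exact (chainWalk_spec hc (hq n)).1
  · obtain ⟨n, hn⟩ := hhit k
    exact ⟨n, congrArg Prod.fst hn⟩

theorem exists_cofinal_reflGen_path [Countable α] [Nonempty α]
    (hdir : ∀ a b, Join (ReflTransGen r) a b) :
    ∃ p : ℕ → α, (∀ n, ReflGen r (p n) (p (n + 1))) ∧ ∀ a, ∃ n, ReflTransGen r a (p n) := by
  have : Encodable α := Encodable.ofCountable α
  have : Inhabited α := Classical.inhabited_of_nonempty'
  have hd : Directed (ReflTransGen r) id := hdir
  obtain ⟨p, hp, hthrough⟩ := exists_reflGen_path_through hd.sequence_mono_nat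
  refine ⟨p, hp, fun a => ?_⟩
  obtain ⟨n, hn⟩ := hthrough (Encodable.encode a + 1)
  exact ⟨n, hn ▸ hd.rel_sequence a⟩

end SpanningTree

/-- A countable confluent relation whose elements are all convertible has a
spanning tree. -/
theorem stmt_8 {α : Type*} [Countable α] (r : α → α → Prop)
    (hconf : ∀ a b c, Relation.ReflTransGen r a b → Relation.ReflTransGen r a c →
      ∃ d, Relation.ReflTransGen r b d ∧ Relation.ReflTransGen r c d)
    (hconn : ∀ a b, Conv r a b) :
    ∃ s : α → α → Prop,
      (∀ a b, s a b → r a b) ∧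
      (∀ a b c, s a b → s a c → b = c) ∧
      (∀ a, ¬ Relation.TransGen s a a) ∧
      (∀ a b, ∃ c, Relation.ReflTransGen s a c ∧ Relation.ReflTransGen s b c) := by
  suffices ∃ s, IsSpanningTree r s by
    obtain ⟨s, hs⟩ := this
    exact ⟨s, hs.le, hs.deterministic, hs.acyclic, hs.join⟩
  rcases isEmpty_or_nonempty α with hα | hα
  · exact ⟨fun _ _ => False, fun _ _ h => h.elim, fun _ _ _ h => h.elim, isEmptyElim, isEmptyElim⟩
  obtain ⟨p, hp, hcof⟩ := exists_cofinal_reflGen_path fun a b => join_of_conv hconf (hconn a b)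
  by_cases hreach : ∀ a, ∃ i, IsExit r p i ∧ ReflTransGen r a (p i)
  · exact ⟨_, isSpanningTree_exitWalk hp hreach⟩
  · push Not at hreach
    obtain ⟨a, hno⟩ := hreach
    obtain ⟨n, hn⟩ := hcof a
    exact ⟨_, isSpanningTree_of_sink (reflTransGen_of_forall_not_isExit hp hcof hn hno)⟩
end

section
/- In a deterministic rewrite relation, any two elements possessing a common reduct possess a least common reduct: let s be a binary relation on a type α that is deterministic (s a b and s a c imply b = c). If elements a and b have a common s-reduct (there exists c with s* a c and s* b c), then they have a least one: there exists c with s* a c and s* b c such that every common s-reduct c' of a and b (s* a c' and s* b c') satisfies s* c c'. -/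
/-- In a deterministic rewrite relation, two elements with a common reduct have a
least common reduct. -/
theorem stmt_9 {α : Type*} (s : α → α → Prop)
    (hdet : ∀ a b c, s a b → s a c → b = c) :
    ∀ a b, (∃ c, Relation.ReflTransGen s a c ∧ Relation.ReflTransGen s b c) →
      ∃ c, Relation.ReflTransGen s a c ∧ Relation.ReflTransGen s b c ∧
        ∀ c', Relation.ReflTransGen s a c' → Relation.ReflTransGen s b c' →
          Relation.ReflTransGen s c c' := by
  intro a b ⟨c0, hac0, hbc0⟩
  induction hac0 using Relation.ReflTransGen.head_induction_on with
  | refl =>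
    exact ⟨c0, .refl, hbc0, fun c' hac' _ => hac'⟩
  | @head x y h htail ih =>
    by_cases hba : Relation.ReflTransGen s b x
    · exact ⟨x, .refl, hba, fun c' hac' _ => hac'⟩
    · obtain ⟨c, hyc, hbc, hmin⟩ := ih
      refine ⟨c, .head h hyc, hbc, fun c' hac' hbc' => ?_⟩
      rcases hac'.cases_head with rfl | ⟨z, hz, hzc'⟩
      · exact absurd hbc' hba
      · exact hmin c' (hdet x z y hz h ▸ hzc') hbc'
end
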